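/- The stable Lyapunov exponent of the 1-periodic orbit through p_ℓ converges to a negative limit: as ℓ → ∞, log|μ_s(ℓ)| / (2πℓ) → −δ/K. In particular, both limiting Lyapunov exponents 1/K and −δ/K are nonzero, so the Lyapunov exponents at the 1-periodic orbits are uniformly bounded away from zero for large ℓ. -/

import Mathlib

open Filter Topology Matrix

/-- `y_ℓ = exp(−2πℓ/K)`, the `y`-coordinate of the fixed point `p_ℓ`. -/
noncomputable def yFix (K : ℝ) (ℓ : ℕ) : ℝ :=
  Real.exp (-(2 * Real.pi * (ℓ : ℝ)) / K)

/-- `d_ℓ = δ·exp(−2π(δ−1)ℓ/K)`, the determinant of the derivative at `p_ℓ`. -/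
noncomputable def detFix (K δ : ℝ) (ℓ : ℕ) : ℝ :=
  δ * Real.exp (-(2 * Real.pi * (δ - 1) * (ℓ : ℝ)) / K)

/-- `t_ℓ`, the trace of the derivative at `p_ℓ`. -/
noncomputable def traceFix (K δ lam : ℝ) (ℓ : ℕ) : ℝ :=
  1 + δ * Real.exp (-(2 * Real.pi * (δ - 1) * (ℓ : ℝ)) / K)
    - K * Real.exp (2 * Real.pi * (ℓ : ℝ) / K) *
      Real.sqrt (lam ^ 2 - (yFix K ℓ - yFix K ℓ ^ δ) ^ 2)

/-- `μ_s(ℓ)`, the stable eigenvalue at `p_ℓ`. -/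
noncomputable def muS (K δ lam : ℝ) (ℓ : ℕ) : ℝ :=
  (traceFix K δ lam ℓ + Real.sqrt (traceFix K δ lam ℓ ^ 2 - 4 * detFix K δ ℓ)) / 2

/-- `μ_u(ℓ)`, the unstable eigenvalue at `p_ℓ`. -/
noncomputable def muU (K δ lam : ℝ) (ℓ : ℕ) : ℝ :=
  (traceFix K δ lam ℓ - Real.sqrt (traceFix K δ lam ℓ ^ 2 - 4 * detFix K δ ℓ)) / 2

/-- `c_ℓ = cos x_ℓ`. -/
noncomputable def cosFix (K δ lam : ℝ) (ℓ : ℕ) : ℝ :=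
  Real.sqrt (1 - ((yFix K ℓ - yFix K ℓ ^ δ) / lam) ^ 2)

/-- `M_ℓ`, the derivative of the model first-return map at the fixed point `p_ℓ`. -/
noncomputable def derivFix (K δ lam : ℝ) (ℓ : ℕ) : Matrix (Fin 2) (Fin 2) ℝ :=
  !![1, -K / yFix K ℓ;
     lam * cosFix K δ lam ℓ,
       δ * yFix K ℓ ^ (δ - 1) - (lam * K / yFix K ℓ) * cosFix K δ lam ℓ]

/-! Scaled by `y_ℓ = e^{-2πℓ/K}`, the trace tends to `-Kλ` while `y_ℓ² d_ℓ → 0`, so the root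
of larger modulus satisfies `y_ℓ μ_u → -Kλ`: `|μ_u|` grows like `e^{2πℓ/K}`. Since
`μ_s μ_u = d_ℓ = δ e^{-2π(δ-1)ℓ/K}`, `|μ_s|` then decays like `e^{-2πδℓ/K}`, and taking logarithms
gives the exponents `1/K` and `-δ/K`. -/

open Real

theorem add_sqrt_discrim_mul_sub_sqrt_discrim {t d : ℝ} (h : 4 * d ≤ t ^ 2) :
    (t + √(t ^ 2 - 4 * d)) / 2 * ((t - √(t ^ 2 - 4 * d)) / 2) = d := by
  have hsq := Real.sq_sqrt (sub_nonneg.mpr h)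
  linear_combination (-1 / 4 : ℝ) * hsq

section QuadraticRoots

variable {α : Type*} {l : Filter α} {w t d : α → ℝ} {T : ℝ}

theorem eventually_four_mul_le_sq (ht : Tendsto (fun x => w x * t x) l (𝓝 T))
    (hd : Tendsto (fun x => w x ^ 2 * d x) l (𝓝 0)) (hT : T ≠ 0) :
    ∀ᶠ x in l, 4 * d x ≤ t x ^ 2 := by
  have hdisc : Tendsto (fun x => (w x * t x) ^ 2 - 4 * (w x ^ 2 * d x)) l (𝓝 (T ^ 2 - 4 * 0)) :=
    (ht.pow 2).sub (hd.const_mul 4)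
  rw [mul_zero, sub_zero] at hdisc
  filter_upwards [hdisc.eventually (eventually_gt_nhds (sq_pos_of_ne_zero hT))] with x hx
  by_contra! hlt
  nlinarith [sq_nonneg (w x)]

theorem tendsto_mul_sub_sqrt_discrim (hw : ∀ᶠ x in l, 0 ≤ w x)
    (ht : Tendsto (fun x => w x * t x) l (𝓝 T))
    (hd : Tendsto (fun x => w x ^ 2 * d x) l (𝓝 0)) (hT : T ≤ 0) :
    Tendsto (fun x => w x * ((t x - √(t x ^ 2 - 4 * d x)) / 2)) l (𝓝 T) := by
  have hroot : Tendsto (fun x => √((w x * t x) ^ 2 - 4 * (w x ^ 2 * d x))) l (𝓝 (-T)) := by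
    have h := ((ht.pow 2).sub (hd.const_mul 4)).sqrt
    rwa [mul_zero, sub_zero, Real.sqrt_sq_eq_abs, abs_of_nonpos hT] at h
  have h := (ht.sub hroot).div_const 2
  rw [sub_neg_eq_add, add_self_div_two] at h
  refine h.congr' ?_
  filter_upwards [hw] with x hx
  rw [show (w x * t x) ^ 2 - 4 * (w x ^ 2 * d x) = w x ^ 2 * (t x ^ 2 - 4 * d x) by ring,
    Real.sqrt_mul (sq_nonneg _), Real.sqrt_sq hx]
  ring

end QuadraticRoots

theorem tendsto_log_abs_div_of_tendsto_div_exp {α : Type*} {l : Filter α} {x τ : α → ℝ}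
    {c L : ℝ} (hτ : Tendsto τ l atTop) (hx : Tendsto (fun n => x n / exp (c * τ n)) l (𝓝 L))
    (hL : L ≠ 0) : Tendsto (fun n => log |x n| / τ n) l (𝓝 c) := by
  have hlog := (hx.abs.log (abs_ne_zero.mpr hL)).div_atTop hτ
  rw [← zero_add c]
  refine (hlog.add_const c).congr' ?_
  filter_upwards [hx.eventually_ne hL, hτ.eventually_ne_atTop 0] with n hxL hτn
  have hxn : x n ≠ 0 := by rintro h; simp [h] at hxL
  rw [abs_div, abs_of_pos (exp_pos _), log_div (abs_ne_zero.mpr hxn) (exp_ne_zero _), log_exp]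
  field_simp
  ring

theorem exists_pos_eventually_le_abs_of_tendsto {α : Type*} {l : Filter α} {f g : α → ℝ}
    {a b : ℝ} (hf : Tendsto f l (𝓝 a)) (hg : Tendsto g l (𝓝 b)) (ha : a ≠ 0) (hb : b ≠ 0) :
    ∃ c > 0, ∀ᶠ x in l, c ≤ |f x| ∧ c ≤ |g x| := by
  have hc : 0 < min |a| |b| := lt_min (abs_pos.mpr ha) (abs_pos.mpr hb)
  refine ⟨min |a| |b| / 2, half_pos hc, ?_⟩
  have hca : min |a| |b| / 2 < |a| := (half_lt_self hc).trans_le (min_le_left _ _)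
  have hcb : min |a| |b| / 2 < |b| := (half_lt_self hc).trans_le (min_le_right _ _)
  exact (hf.abs.eventually (eventually_ge_nhds hca)).and
    (hg.abs.eventually (eventually_ge_nhds hcb))

section ModelReturnMap

variable {K δ lam : ℝ}

theorem yFix_eq_inv_exp (K : ℝ) (ℓ : ℕ) : yFix K ℓ = (exp (1 / K * (2 * π * ℓ)))⁻¹ := by
  rw [yFix, ← exp_neg]
  ring_nf

theorem detFix_eq_mul_exp_mul_exp (K δ : ℝ) (ℓ : ℕ) :
    detFix K δ ℓ = δ * exp (-δ / K * (2 * π * ℓ)) * exp (1 / K * (2 * π * ℓ)) := by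
  rw [detFix, mul_assoc δ, ← exp_add]
  ring_nf

theorem tendsto_two_pi_mul_natCast : Tendsto (fun ℓ : ℕ => 2 * π * (ℓ : ℝ)) atTop atTop :=
  tendsto_natCast_atTop_atTop.const_mul_atTop (by positivity)

theorem tendsto_exp_neg_mul_two_pi_mul_natCast {c : ℝ} (hc : 0 < c) :
    Tendsto (fun ℓ : ℕ => exp (-(c * (2 * π * ℓ)))) atTop (𝓝 0) :=
  tendsto_exp_atBot.comp <| tendsto_neg_atTop_atBot.comp <|
    tendsto_two_pi_mul_natCast.const_mul_atTop hc

theorem tendsto_yFix (hK : 0 < K) : Tendsto (yFix K) atTop (𝓝 0) := by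
  refine (tendsto_exp_neg_mul_two_pi_mul_natCast (one_div_pos.mpr hK)).congr fun ℓ => ?_
  rw [yFix_eq_inv_exp, exp_neg]

theorem tendsto_detFix (hK : 0 < K) (hδ : 1 < δ) : Tendsto (detFix K δ) atTop (𝓝 0) := by
  have h := (tendsto_exp_neg_mul_two_pi_mul_natCast
    (div_pos (sub_pos.mpr hδ) hK)).const_mul δ
  rw [mul_zero] at h
  refine h.congr fun ℓ => ?_
  rw [detFix]
  ring_nf

theorem yFix_mul_traceFix (K δ lam : ℝ) (ℓ : ℕ) :
    yFix K ℓ * traceFix K δ lam ℓ =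
      yFix K ℓ * (1 + detFix K δ ℓ) - K * √(lam ^ 2 - (yFix K ℓ - yFix K ℓ ^ δ) ^ 2) := by
  have hinv : yFix K ℓ * exp (2 * π * ℓ / K) = 1 := by
    rw [yFix, ← exp_add]
    ring_nf
    exact exp_zero
  rw [traceFix, detFix]
  linear_combination (-(K * √(lam ^ 2 - (yFix K ℓ - yFix K ℓ ^ δ) ^ 2))) * hinv

theorem tendsto_yFix_mul_traceFix (hK : 0 < K) (hδ : 1 < δ) (hlam : 0 < lam) :
    Tendsto (fun ℓ => yFix K ℓ * traceFix K δ lam ℓ) atTop (𝓝 (-(K * lam))) := by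
  have hy := tendsto_yFix hK
  have hyδ : Tendsto (fun ℓ => yFix K ℓ ^ δ) atTop (𝓝 0) := by
    simpa [Real.zero_rpow (by linarith : δ ≠ 0)] using
      hy.rpow_const (p := δ) (Or.inr (by linarith))
  have hroot : Tendsto (fun ℓ => √(lam ^ 2 - (yFix K ℓ - yFix K ℓ ^ δ) ^ 2)) atTop (𝓝 lam) := by
    have h := ((tendsto_const_nhds (x := lam ^ 2)).sub ((hy.sub hyδ).pow 2)).sqrt
    rwa [sub_zero, zero_pow two_ne_zero, sub_zero, Real.sqrt_sq hlam.le] at h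
  have h := (hy.mul ((tendsto_const_nhds (x := 1)).add (tendsto_detFix hK hδ))).sub
    (hroot.const_mul K)
  rw [zero_mul, zero_sub] at h
  exact h.congr fun ℓ => (yFix_mul_traceFix K δ lam ℓ).symm

theorem tendsto_yFix_sq_mul_detFix (hK : 0 < K) (hδ : 1 < δ) :
    Tendsto (fun ℓ => yFix K ℓ ^ 2 * detFix K δ ℓ) atTop (𝓝 0) := by
  simpa using ((tendsto_yFix hK).pow 2).mul (tendsto_detFix hK hδ)

theorem tendsto_muU_div_exp (hK : 0 < K) (hδ : 1 < δ) (hlam : 0 < lam) :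
    Tendsto (fun ℓ => muU K δ lam ℓ / exp (1 / K * (2 * π * ℓ))) atTop (𝓝 (-(K * lam))) := by
  have h := tendsto_mul_sub_sqrt_discrim (w := yFix K)
    (Eventually.of_forall fun ℓ => (exp_pos _).le)
    (tendsto_yFix_mul_traceFix hK hδ hlam) (tendsto_yFix_sq_mul_detFix hK hδ)
    (neg_nonpos.mpr (mul_pos hK hlam).le)
  refine h.congr fun ℓ => ?_
  rw [muU, yFix_eq_inv_exp, inv_mul_eq_div]

theorem tendsto_muS_div_exp (hK : 0 < K) (hδ : 1 < δ) (hlam : 0 < lam) :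
    Tendsto (fun ℓ => muS K δ lam ℓ / exp (-δ / K * (2 * π * ℓ))) atTop
      (𝓝 (δ / -(K * lam))) := by
  have hU := tendsto_muU_div_exp hK hδ hlam
  have hKlam : -(K * lam) ≠ 0 := neg_ne_zero.mpr (mul_pos hK hlam).ne'
  have hdisc := eventually_four_mul_le_sq (tendsto_yFix_mul_traceFix hK hδ hlam)
    (tendsto_yFix_sq_mul_detFix hK hδ) hKlam
  refine (tendsto_const_nhds.div hU hKlam).congr' ?_
  filter_upwards [hdisc, hU.eventually_ne hKlam] with ℓ hℓ hUℓ
  have hvieta : muS K δ lam ℓ * muU K δ lam ℓ = detFix K δ ℓ :=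
    add_sqrt_discrim_mul_sub_sqrt_discrim hℓ
  have hUne : muU K δ lam ℓ ≠ 0 := by rintro h; simp [h] at hUℓ
  show δ / (muU K δ lam ℓ / _) = muS K δ lam ℓ / _
  rw [div_div_eq_mul_div, div_eq_div_iff hUne (exp_ne_zero _), hvieta,
    detFix_eq_mul_exp_mul_exp]
  ring

end ModelReturnMap

/-- the stable Lyapunov exponent converges to `−δ/K < 0`; in particular
both limiting Lyapunov exponents are nonzero and the Lyapunov exponents at the
1-periodic orbits are uniformly bounded away from zero for large `ℓ`. -/
theorem stable_lyapunov_exponent (K δ lam : ℝ) (hK : 0 < K) (hδ : 1 < δ)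
    (hlam : 0 < lam) :
    Tendsto (fun ℓ : ℕ => Real.log |muS K δ lam ℓ| / (2 * Real.pi * (ℓ : ℝ)))
      atTop (𝓝 (-δ / K)) ∧
    (1 / K ≠ 0) ∧ (-δ / K ≠ 0) ∧
    ∃ c > 0, ∀ᶠ ℓ : ℕ in atTop,
      c ≤ |Real.log |muS K δ lam ℓ| / (2 * Real.pi * (ℓ : ℝ))| ∧
      c ≤ |Real.log |muU K δ lam ℓ| / (2 * Real.pi * (ℓ : ℝ))| := by
  have hKlam : -(K * lam) ≠ 0 := neg_ne_zero.mpr (mul_pos hK hlam).ne'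
  have hS := tendsto_log_abs_div_of_tendsto_div_exp tendsto_two_pi_mul_natCast
    (tendsto_muS_div_exp hK hδ hlam) (div_ne_zero (by linarith) hKlam)
  have hU := tendsto_log_abs_div_of_tendsto_div_exp tendsto_two_pi_mul_natCast
    (tendsto_muU_div_exp hK hδ hlam) hKlam
  have hexpU : 1 / K ≠ 0 := one_div_ne_zero hK.ne'
  have hexpS : -δ / K ≠ 0 := div_ne_zero (by linarith) hK.ne'
  exact ⟨hS, hexpU, hexpS, exists_pos_eventually_le_abs_of_tendsto hS hU hexpS hexpU⟩
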